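/- Assume additionally that 3(v3 + v0)/(2λμ) → 0 as t → ∞. Let (a+, φ) be a solution of the reduced Stenzel monopole system on [t*, ∞) with a+(t*) > 0, φ(t*) < 0 and φ'(t*) < 0. Then a+ is unbounded on [t*, ∞); in fact there exist T ≥ t* and c > 0 such that a+(t) ≥ c·exp(−φ(t*)·(t − T)) for all t ≥ T. -/

import Mathlib

open Set Filter

/-- The hypotheses on the functions `λ, μ, v0, v3` encoding the Stenzel Calabi–Yau
structure on `T*S³`: they are C¹ on `(0,∞)`, satisfy `λ > 0`, `μ > 0`, `v3 − v0 > 0`,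
`v3 + v0 > 0`, `v0 < 0`, `μ² = v3² − v0²`, and the hypo-evolution equations
`μ' = 2λ`, `(μλ)' = 3v3`, `(λv3)' = 3μ`, `(λv0)' = 0`. -/
def StenzelHypo (lam mu v0 v3 : ℝ → ℝ) : Prop :=
  ContDiffOn ℝ 1 lam (Ioi 0) ∧ ContDiffOn ℝ 1 mu (Ioi 0) ∧
  ContDiffOn ℝ 1 v0 (Ioi 0) ∧ ContDiffOn ℝ 1 v3 (Ioi 0) ∧
  (∀ t ∈ Ioi (0 : ℝ), 0 < lam t ∧ 0 < mu t ∧ 0 < v3 t - v0 t ∧ 0 < v3 t + v0 t ∧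
    v0 t < 0 ∧ mu t ^ 2 = v3 t ^ 2 - v0 t ^ 2) ∧
  (∀ t ∈ Ioi (0 : ℝ),
    HasDerivAt mu (2 * lam t) t ∧
    HasDerivAt (fun s => mu s * lam s) (3 * v3 t) t ∧
    HasDerivAt (fun s => lam s * v3 s) (3 * mu t) t ∧
    HasDerivAt (fun s => lam s * v0 s) 0 t)

/-- A solution of the reduced Stenzel monopole system:
`a₊' = −a₊·(3(v3 + v0)/(2λμ) + 2φ)`, `φ' = −(3/μ²)((a₊²/2)(v3 − v0) + v0)`. -/
def IsSolReducedStenzel (lam mu v0 v3 ap phi : ℝ → ℝ) (s : Set ℝ) : Prop :=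
  ∀ t ∈ s,
    HasDerivAt ap (-(ap t) * (3 * (v3 t + v0 t) / (2 * lam t * mu t) + 2 * phi t)) t ∧
    HasDerivAt phi (-(3 / mu t ^ 2) * (ap t ^ 2 / 2 * (v3 t - v0 t) + v0 t)) t

theorem key_alg (l m v3 v0 a p L D3 D0 : ℝ) (hl : l ≠ 0) (hm : m ≠ 0)
    (eq3 : L * v3 + l * D3 = 3 * m) (eq0 : L * v0 + l * D0 = 0)
    (hF : a ^ 2 / 2 * (v3 - v0) + v0 = 0) (hm2 : m ^ 2 = v3 ^ 2 - v0 ^ 2) :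
    2 * a ^ 1 * (-a * (3 * (v3 + v0) / (2 * l * m) + 2 * p)) / 2 * (v3 - v0)
      + a ^ 2 / 2 * (D3 - D0) + D0 = 4 * v0 * p := by
  have h3 : D3 = (3 * m - L * v3) / l := by field_simp; linarith
  have h0 : D0 = -(L * v0) / l := by field_simp; linarith
  rw [h3, h0]
  field_simp
  linear_combination (-8*l*m*p - 2*m*L) * hF + 3*a^2 * hm2

lemma ode_pos (f g : ℝ → ℝ) (t0 : ℝ)
    (hf : ∀ t ∈ Ici t0, HasDerivAt f (f t * g t) t)
    (hg : ContinuousOn g (Ici t0)) (h0 : 0 < f t0) :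
    ∀ t ∈ Ici t0, 0 < f t := by
  intro t1 ht1
  by_contra hle
  push_neg at hle
  have hfc : ContinuousOn f (Ici t0) := fun t ht => ((hf t ht).continuousAt).continuousWithinAt
  have hsub : Icc t0 t1 ⊆ Ici t0 := Icc_subset_Ici_self
  have hzero : ∃ t2 ∈ Icc t0 t1, f t2 = 0 := by
    have := intermediate_value_Icc' ht1 (hfc.mono hsub)
    obtain ⟨t2, ht2, hft2⟩ := this ⟨hle, le_of_lt h0⟩
    exact ⟨t2, ht2, hft2⟩
  obtain ⟨t2, ht2, hft2⟩ := hzero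
  have ht02 : t0 ≤ t2 := ht2.1
  set c : ℝ := t2 + t0 with hc
  set F : ℝ → ℝ := fun s => f (c - s) with hF
  obtain ⟨K, hK⟩ := (isCompact_Icc (a := t0) (b := t2)).exists_bound_of_continuousOn
    (hg.mono (Icc_subset_Ici_self))
  have hmap : ∀ s ∈ Icc t0 t2, c - s ∈ Icc t0 t2 := by
    intro s hs
    exact ⟨by simp only [hc]; linarith [hs.2], by simp only [hc]; linarith [hs.1]⟩
  have hFc : ContinuousOn F (Icc t0 t2) := by
    apply (hfc.mono Icc_subset_Ici_self).comp (by fun_prop)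
    intro s hs; exact hmap s hs
  have hFd : ∀ s ∈ Ico t0 t2, HasDerivWithinAt F (-(f (c - s) * g (c - s))) (Ici s) s := by
    intro s hs
    have harg : c - s ∈ Ici t0 := by simp only [hc, mem_Ici]; linarith [hs.2]
    have hlin : HasDerivAt (fun s : ℝ => c - s) (-1) s := by
      simpa using (hasDerivAt_id s).const_sub c
    have := (hf (c - s) harg).comp s hlin
    have h2 : HasDerivWithinAt (f ∘ fun s => c - s) (f (c - s) * g (c - s) * -1) (Ici s) s :=
      this.hasDerivWithinAt
    rw [mul_neg_one] at h2
    exact h2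
  have hbound : ∀ s ∈ Ico t0 t2, ‖-(f (c - s) * g (c - s))‖ ≤ K * ‖F s‖ + 0 := by
    intro s hs
    have harg : c - s ∈ Icc t0 t2 := hmap s ⟨hs.1, le_of_lt hs.2⟩
    have := hK (c - s) harg
    have h1 : ‖-(f (c - s) * g (c - s))‖ = ‖g (c - s)‖ * ‖F s‖ := by
      simp [hF, norm_mul, mul_comm]
    rw [h1, add_zero]
    exact mul_le_mul_of_nonneg_right this (norm_nonneg _)
  have hstart : ‖F t0‖ ≤ 0 := by simp [hF, hc, hft2]
  have := norm_le_gronwallBound_of_norm_deriv_right_le hFc hFd hstart hbound t2 ⟨ht02, le_refl t2⟩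
  rw [gronwallBound_ε0_δ0] at this
  have : f t0 = 0 := by
    have h2 : F t2 = f t0 := by simp [hF, hc]
    have := norm_le_zero_iff.mp this
    rwa [h2] at this
  linarith

set_option maxHeartbeats 1000000 in
/-- Assume additionally `3(v3 + v0)/(2λμ) → 0` as `t → ∞`.  A solution of the reduced
Stenzel monopole system on `[t*, ∞)` with `a₊(t*) > 0`, `φ(t*) < 0` and `φ'(t*) < 0` has
`a₊` unbounded; in fact there are `T ≥ t*` and `c > 0` with
`a₊(t) ≥ c·exp(−φ(t*)(t − T))` for all `t ≥ T`. -/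
theorem reduced_stenzel_blowup (lam mu v0 v3 ap phi : ℝ → ℝ)
    (hhypo : StenzelHypo lam mu v0 v3)
    (hdecp : Tendsto (fun t => 3 * (v3 t + v0 t) / (2 * lam t * mu t)) atTop (nhds 0))
    (tstar : ℝ) (hts : 0 < tstar)
    (hsol : IsSolReducedStenzel lam mu v0 v3 ap phi (Ici tstar))
    (hp : 0 < ap tstar) (hphi : phi tstar < 0) (hphi' : deriv phi tstar < 0) :
    (¬ ∃ M : ℝ, ∀ t ∈ Ici tstar, ap t ≤ M) ∧
    ∃ T c : ℝ, tstar ≤ T ∧ 0 < c ∧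
      ∀ t, T ≤ t → c * Real.exp (-(phi tstar) * (t - T)) ≤ ap t := by
  obtain ⟨hlamC, hmuC, hv0C, hv3C, hpos, hevol⟩ := hhypo
  have hsub : Ici tstar ⊆ Ioi (0:ℝ) := fun t ht => lt_of_lt_of_le hts ht
  set k : ℝ := -phi tstar with hk
  have hk0 : 0 < k := by simp only [hk]; linarith
  have hlam_pos : ∀ t ∈ Ici tstar, 0 < lam t := fun t ht => (hpos t (hsub ht)).1
  have hmu_pos : ∀ t ∈ Ici tstar, 0 < mu t := fun t ht => (hpos t (hsub ht)).2.1
  have hv30_pos : ∀ t ∈ Ici tstar, 0 < v3 t - v0 t := fun t ht => (hpos t (hsub ht)).2.2.1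
  have hv0_neg : ∀ t ∈ Ici tstar, v0 t < 0 := fun t ht => (hpos t (hsub ht)).2.2.2.2.1
  have hmu2 : ∀ t ∈ Ici tstar, mu t ^ 2 = v3 t ^ 2 - v0 t ^ 2 :=
    fun t ht => (hpos t (hsub ht)).2.2.2.2.2
  have hlamc : ContinuousOn lam (Ioi 0) := hlamC.continuousOn
  have hmuc : ContinuousOn mu (Ioi 0) := hmuC.continuousOn
  have hv0c : ContinuousOn v0 (Ioi 0) := hv0C.continuousOn
  have hv3c : ContinuousOn v3 (Ioi 0) := hv3C.continuousOn
  have hphic : ContinuousOn phi (Ici tstar) :=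
    fun t ht => ((hsol t ht).2.continuousAt).continuousWithinAt
  have hapc : ContinuousOn ap (Ici tstar) :=
    fun t ht => ((hsol t ht).1.continuousAt).continuousWithinAt
  set P : ℝ → ℝ := fun t => 3 * (v3 t + v0 t) / (2 * lam t * mu t) with hPdef
  have hPc : ContinuousOn P (Ici tstar) := by
    apply ContinuousOn.div
    · exact (continuousOn_const.mul ((hv3c.mono hsub).add (hv0c.mono hsub)))
    · exact (continuousOn_const.mul (hlamc.mono hsub)).mul (hmuc.mono hsub)
    · intro t ht
      have := hlam_pos t ht; have := hmu_pos t ht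
      positivity
  have hap_pos : ∀ t ∈ Ici tstar, 0 < ap t := by
    apply ode_pos ap (fun t => -(P t + 2 * phi t)) tstar _ _ hp
    · intro t ht
      have := (hsol t ht).1
      convert this using 1
      simp only [hPdef]; ring
    · exact (hPc.add (continuousOn_const.mul hphic)).neg
  have hdlam : ∀ t ∈ Ici tstar, HasDerivAt lam (deriv lam t) t := fun t ht =>
    ((hlamC.differentiableOn one_ne_zero).differentiableAt
      (isOpen_Ioi.mem_nhds (hsub ht))).hasDerivAt
  have hdv3 : ∀ t ∈ Ici tstar, HasDerivAt v3 (deriv v3 t) t := fun t ht =>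
    ((hv3C.differentiableOn one_ne_zero).differentiableAt
      (isOpen_Ioi.mem_nhds (hsub ht))).hasDerivAt
  have hdv0 : ∀ t ∈ Ici tstar, HasDerivAt v0 (deriv v0 t) t := fun t ht =>
    ((hv0C.differentiableOn one_ne_zero).differentiableAt
      (isOpen_Ioi.mem_nhds (hsub ht))).hasDerivAt
  set F : ℝ → ℝ := fun t => ap t ^ 2 / 2 * (v3 t - v0 t) + v0 t with hFdef
  have hFc : ContinuousOn F (Ici tstar) := by
    apply ContinuousOn.add _ (hv0c.mono hsub)
    exact ((hapc.pow 2).div_const 2).mul ((hv3c.mono hsub).sub (hv0c.mono hsub))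
  have hderiv_phi : ∀ t ∈ Ici tstar, deriv phi t = -(3 / mu t ^ 2) * F t :=
    fun t ht => (hsol t ht).2.deriv
  have hFts : 0 < F tstar := by
    have h1 := hderiv_phi tstar self_mem_Ici
    have h2 : (0:ℝ) < 3 / mu tstar ^ 2 := by have := hmu_pos tstar self_mem_Ici; positivity
    rw [h1] at hphi'
    by_contra hcon
    push_neg at hcon
    nlinarith [mul_nonneg h2.le (neg_nonneg.mpr hcon)]
  -- F positive everywhere
  have hF_pos : ∀ t ∈ Ici tstar, 0 < F t := by
    by_contra hcon
    push_neg at hcon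
    obtain ⟨s, hs, hFs⟩ := hcon
    set S : Set ℝ := Icc tstar s ∩ F ⁻¹' (Iic 0) with hSdef
    have hSne : S.Nonempty := ⟨s, ⟨⟨hs, le_refl s⟩, hFs⟩⟩
    have hSclosed : IsClosed S :=
      (hFc.mono Icc_subset_Ici_self).preimage_isClosed_of_isClosed isClosed_Icc isClosed_Iic
    have hSbdd : BddBelow S := ⟨tstar, fun x hx => hx.1.1⟩
    set t1 : ℝ := sInf S with ht1def
    have ht1S : t1 ∈ S := hSclosed.csInf_mem hSne hSbdd
    have ht1mem : t1 ∈ Ici tstar := ht1S.1.1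
    have hFt1le : F t1 ≤ 0 := ht1S.2
    have htlt : tstar < t1 := lt_of_le_of_ne ht1mem (fun h => by
      rw [← h] at hFt1le; linarith)
    have hFpos_before : ∀ x ∈ Ico tstar t1, 0 < F x := by
      intro x hx
      by_contra hx0
      push_neg at hx0
      have hxS : x ∈ S := ⟨⟨hx.1, le_trans (le_of_lt hx.2) ht1S.1.2⟩, hx0⟩
      exact absurd (csInf_le hSbdd hxS) (not_le.mpr hx.2)
    have hFt1 : F t1 = 0 := by
      refine le_antisymm hFt1le ?_
      have hne : (nhdsWithin t1 (Ico tstar t1)).NeBot :=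
        mem_closure_iff_nhdsWithin_neBot.mp (by
          rw [closure_Ico (ne_of_lt htlt)]; exact ⟨le_of_lt htlt, le_refl t1⟩)
      have hlim : Tendsto F (nhdsWithin t1 (Ico tstar t1)) (nhds (F t1)) :=
        ((hFc t1 ht1mem).mono Ico_subset_Ici_self).tendsto
      exact ge_of_tendsto hlim (eventually_of_mem self_mem_nhdsWithin
        (fun x hx => (hFpos_before x hx).le))
    have hphile : phi t1 ≤ phi tstar := by
      have hanti : AntitoneOn phi (Icc tstar t1) := by
        apply antitoneOn_of_deriv_nonpos (convex_Icc _ _)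
          (hphic.mono Icc_subset_Ici_self)
        · intro x hx
          rw [interior_Icc] at hx
          exact ((hsol x (Ico_subset_Ici_self ⟨hx.1.le, hx.2⟩)).2.differentiableAt).differentiableWithinAt
        · intro x hx
          rw [interior_Icc] at hx
          have hxI : x ∈ Ici tstar := le_of_lt hx.1
          rw [hderiv_phi x hxI]
          have h3 : (0:ℝ) < 3 / mu x ^ 2 := by have := hmu_pos x hxI; positivity
          nlinarith [mul_nonneg h3.le (hFpos_before x ⟨hx.1.le, hx.2⟩).le]
      exact hanti ⟨le_refl tstar, le_of_lt htlt⟩ ⟨le_of_lt htlt, le_refl t1⟩ (le_of_lt htlt)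
    have ht1I : t1 ∈ Ici tstar := ht1mem
    have hl0 : lam t1 ≠ 0 := ne_of_gt (hlam_pos t1 ht1I)
    have hm0 : mu t1 ≠ 0 := ne_of_gt (hmu_pos t1 ht1I)
    obtain ⟨emu, eml, el3, el0⟩ := hevol t1 (hsub ht1I)
    have eq3 : deriv lam t1 * v3 t1 + lam t1 * deriv v3 t1 = 3 * mu t1 :=
      ((hdlam t1 ht1I).mul (hdv3 t1 ht1I)).unique el3
    have eq0 : deriv lam t1 * v0 t1 + lam t1 * deriv v0 t1 = 0 :=
      ((hdlam t1 ht1I).mul (hdv0 t1 ht1I)).unique el0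
    have hapd := (hsol t1 ht1I).1
    have hFd : HasDerivAt F
        (2 * ap t1 ^ 1 * (-(ap t1) * (P t1 + 2 * phi t1)) / 2
          * (v3 t1 - v0 t1)
          + ap t1 ^ 2 / 2 * (deriv v3 t1 - deriv v0 t1) + deriv v0 t1) t1 := by
      exact (((hapd.pow 2).div_const 2).mul ((hdv3 t1 ht1I).sub (hdv0 t1 ht1I))).add (hdv0 t1 ht1I)
    have hkey := key_alg (lam t1) (mu t1) (v3 t1) (v0 t1) (ap t1) (phi t1)
      (deriv lam t1) (deriv v3 t1) (deriv v0 t1) hl0 hm0 eq3 eq0 hFt1 (hmu2 t1 ht1I)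
    rw [show P t1 = 3 * (v3 t1 + v0 t1) / (2 * lam t1 * mu t1) from rfl] at hFd
    rw [hkey] at hFd
    have hdpos : 0 < 4 * v0 t1 * phi t1 := by
      have h1 := hv0_neg t1 ht1I
      have h2 : phi t1 < 0 := lt_of_le_of_lt hphile hphi
      nlinarith
    have hslope := hasDerivAt_iff_tendsto_slope.mp hFd
    have hslope2 : Tendsto (slope F t1) (nhdsWithin t1 (Iio t1)) (nhds (4 * v0 t1 * phi t1)) :=
      hslope.mono_left (nhdsWithin_mono t1 (fun x hx => ne_of_lt hx))
    have hev1 : ∀ᶠ x in nhdsWithin t1 (Iio t1), 0 < slope F t1 x :=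
      hslope2.eventually (eventually_gt_nhds hdpos)
    have hev2 : ∀ᶠ x in nhdsWithin t1 (Iio t1), x ∈ Ioo tstar t1 :=
      eventually_of_mem (Ioo_mem_nhdsLT htlt) (fun x hx => hx)
    obtain ⟨x, hx1, hx2⟩ := (hev1.and hev2).exists
    rw [slope_def_field] at hx1
    have hxlt : x < t1 := hx2.2
    rcases div_pos_iff.mp hx1 with ⟨h1, h2⟩ | ⟨h1, h2⟩
    · linarith
    · have := hFpos_before x ⟨hx2.1.le, hxlt⟩
      rw [hFt1] at h1
      linarith
  -- phi is antitone on all of Ici tstar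
  have hanti : AntitoneOn phi (Ici tstar) := by
    apply antitoneOn_of_deriv_nonpos (convex_Ici _) hphic
    · intro x hx
      rw [interior_Ici] at hx
      exact ((hsol x (mem_Ici.mpr (le_of_lt (mem_Ioi.mp hx)))).2.differentiableAt).differentiableWithinAt
    · intro x hx
      rw [interior_Ici] at hx
      have hxI : x ∈ Ici tstar := mem_Ici.mpr (le_of_lt (mem_Ioi.mp hx))
      rw [hderiv_phi x hxI]
      have h3 : (0:ℝ) < 3 / mu x ^ 2 := by have := hmu_pos x hxI; positivity
      nlinarith [mul_nonneg h3.le (hF_pos x hxI).le]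
  have hphile : ∀ t ∈ Ici tstar, phi t ≤ phi tstar := fun t ht =>
    hanti self_mem_Ici ht ht
  -- choose T
  obtain ⟨T0, hT0⟩ := eventually_atTop.mp (hdecp.eventually_lt_const hk0)
  set T : ℝ := max tstar T0 with hTdef
  have hTts : tstar ≤ T := le_max_left _ _
  have hTI : T ∈ Ici tstar := hTts
  have hcpos : 0 < ap T := hap_pos T hTI
  set v : ℝ → ℝ := fun t => ap t * Real.exp (-(k * (t - T))) with hvdef
  have hder : ∀ x ∈ Ici T, HasDerivAt v
      ((-(ap x) * (P x + 2 * phi x)) * Real.exp (-(k * (x - T)))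
        + ap x * (Real.exp (-(k * (x - T))) * -k)) x := by
    intro x hx
    have hxI : x ∈ Ici tstar := le_trans hTts hx
    have hexp : HasDerivAt (fun t => Real.exp (-(k * (t - T))))
        (Real.exp (-(k * (x - T))) * -k) x := by
      have hin : HasDerivAt (fun t : ℝ => -(k * (t - T))) (-k) x := by
        simpa using (((hasDerivAt_id x).sub_const T).const_mul k).fun_neg
      exact hin.exp
    exact ((hsol x hxI).1).mul hexp
  have hmono : MonotoneOn v (Ici T) := by
    apply monotoneOn_of_deriv_nonneg (convex_Ici _)
    · apply (hapc.mono (Ici_subset_Ici.mpr hTts)).mul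
      exact (Real.continuous_exp.comp (by continuity)).continuousOn
    · intro x hx
      rw [interior_Ici] at hx
      exact ((hder x (mem_Ici.mpr (le_of_lt (mem_Ioi.mp hx)))).differentiableAt).differentiableWithinAt
    · intro x hx
      rw [interior_Ici] at hx
      have hxT : x ∈ Ici T := mem_Ici.mpr (le_of_lt (mem_Ioi.mp hx))
      rw [(hder x hxT).deriv]
      have hxI : x ∈ Ici tstar := le_trans hTts hxT
      have hPx : P x < k := hT0 x (le_trans (le_max_right tstar T0) hxT)
      have hphix : phi x ≤ phi tstar := hphile x hxI
      have hax := hap_pos x hxI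
      have hex : 0 < Real.exp (-(k * (x - T))) := Real.exp_pos _
      have hneg : 0 < -(P x + 2 * phi x + k) := by
        have : k = -phi tstar := hk
        linarith
      nlinarith [mul_pos (mul_pos hax hex) hneg]
  have hbound : ∀ t, T ≤ t → ap T * Real.exp (k * (t - T)) ≤ ap t := by
    intro t ht
    have h1 : v T ≤ v t := hmono self_mem_Ici ht ht
    have h2 : v T = ap T := by simp [hvdef]
    have h3 : v t = ap t / Real.exp (k * (t - T)) := by
      show ap t * Real.exp (-(k * (t - T))) = _
      rw [div_eq_mul_inv, ← Real.exp_neg]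
    rw [h2, h3] at h1
    exact (le_div_iff₀ (Real.exp_pos _)).mp h1
  have hmain : ∃ T c : ℝ, tstar ≤ T ∧ 0 < c ∧
      ∀ t, T ≤ t → c * Real.exp (k * (t - T)) ≤ ap t :=
    ⟨T, ap T, hTts, hcpos, hbound⟩
  clear_value k
  constructor
  · rintro ⟨M, hM⟩
    have hMc : ap T ≤ M := hM T hTI
    have hMpos : 0 < M := lt_of_lt_of_le hcpos hMc
    obtain ⟨t0, ht0def⟩ : ∃ t0 : ℝ, t0 = T + M / (ap T * k) := ⟨_, rfl⟩
    have hfrac : 0 ≤ M / (ap T * k) := by positivity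
    have ht0T : T ≤ t0 := by rw [ht0def]; linarith
    have h1 := hbound t0 ht0T
    have h2 : ap t0 ≤ M := hM t0 (le_trans hTts ht0T)
    have h3 : 1 + k * (t0 - T) ≤ Real.exp (k * (t0 - T)) := by
      have := Real.add_one_le_exp (k * (t0 - T)); linarith
    have h4 : k * (t0 - T) = M / ap T := by
      have hk' : k ≠ 0 := ne_of_gt hk0
      have hc' : ap T ≠ 0 := ne_of_gt hcpos
      rw [ht0def]
      field_simp
      ring
    have h5 : ap T * (1 + k * (t0 - T)) ≤ ap T * Real.exp (k * (t0 - T)) :=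
      mul_le_mul_of_nonneg_left h3 hcpos.le
    rw [h4] at h5
    have h6 : ap T * (1 + M / ap T) = ap T + M := by field_simp
    nlinarith
  · exact hmain
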